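/- Let u, v be nonempty words over X such that no nonempty suffix of u is a prefix of v, no nonempty suffix of v is a prefix of u, no nonempty proper suffix of u is a prefix of u, no nonempty proper suffix of v is a prefix of v, and neither of u, v is a factor of the other. Then in any word w, any two distinct occurrences of words from {u, v} are disjoint (their position intervals do not overlap). -/
import Mathlib


/-- `p` occurs in `w` at position `i`. -/
def OccursAt {X : Type*} (p w : List X) (i : ℕ) : Prop :=
  ∃ a b : List X, w = a ++ p ++ b ∧ a.length = i

/-- A word `p` is a factor (contiguous subword) of `w`. -/
def IsFactor {X : Type*} (p w : List X) : Prop :=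
  ∃ a b : List X, w = a ++ p ++ b

private lemma key_no_overlap
    {X : Type*} (u v : List X)
    (h1 : ∀ t : List X, t ≠ [] → t <:+ u → ¬ t <+: v)
    (h2 : ∀ t : List X, t ≠ [] → t <:+ v → ¬ t <+: u)
    (h3 : ∀ t : List X, t ≠ [] → t.length < u.length → t <:+ u → ¬ t <+: u)
    (h4 : ∀ t : List X, t ≠ [] → t.length < v.length → t <:+ v → ¬ t <+: v)
    (h5 : ¬ IsFactor u v) (h6 : ¬ IsFactor v u)
    (w p q : List X) (i j : ℕ)
    (hp : p = u ∨ p = v) (hq : q = u ∨ q = v)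
    (hop : OccursAt p w i) (hoq : OccursAt q w j)
    (hij : i ≤ j) (hlt : j < i + p.length) (hne : (p, i) ≠ (q, j)) : False := by
  obtain ⟨a, b, hw1, ha⟩ := hop
  obtain ⟨c, d, hw2, hc⟩ := hoq
  set k := j - i with hk
  have hkp : k < p.length := by omega
  have hsplit : (a ++ p.take k) ++ (p.drop k ++ b) = c ++ (q ++ d) := by
    have hmid : List.take k p ++ (List.drop k p ++ b) = p ++ b := by
      rw [← List.append_assoc, List.take_append_drop]
    rw [List.append_assoc, hmid, ← List.append_assoc, ← hw1, hw2, List.append_assoc]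
  have hlen : (a ++ p.take k).length = c.length := by
    simp [ha, hc, List.length_take]
    omega
  obtain ⟨-, heq⟩ := List.append_inj hsplit hlen
  set t := p.drop k with htdef
  have ht_suf : t <:+ p := List.drop_suffix k p
  have ht_len : t.length = p.length - k := by simp [htdef]
  have ht_ne : t ≠ [] := by
    intro h
    rw [h] at ht_len
    simp at ht_len
    omega
  -- helper for factor contradictions
  have factor_contra : ∀ r s : List X, (r = u ∨ r = v) → (s = u ∨ s = v) →
      r ≠ s → IsFactor r s → False := by
    rintro r s (rfl | rfl) (rfl | rfl) hrs hf
    · exact hrs rfl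
    · exact h5 hf
    · exact h6 hf
    · exact hrs rfl
  by_cases hle : t.length ≤ q.length
  · -- t is a prefix of q
    have htq : t <+: q := by
      have h1' : t <+: q ++ d := ⟨b, heq⟩
      exact List.prefix_of_prefix_length_le h1' (List.prefix_append q d) hle
    by_cases hkz : k = 0
    · -- i = j, p is a prefix of q
      have hij' : i = j := by omega
      have htp : t = p := by rw [htdef, hkz, List.drop_zero]
      rw [htp] at htq hle
      by_cases hpq : p.length = q.length
      · have : p = q := htq.eq_of_length hpq
        exact hne (by rw [this, hij'])
      · have hpq' : p ≠ q := fun h => hpq (by rw [h])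
        obtain ⟨r, hr⟩ := htq
        exact factor_contra p q hp hq hpq' ⟨[], r, by simp [hr]⟩
    · -- t is a nonempty proper suffix of p and a prefix of q
      have htlt : t.length < p.length := by omega
      rcases hp with rfl | rfl <;> rcases hq with rfl | rfl
      · exact h3 t ht_ne htlt ht_suf htq
      · exact h1 t ht_ne ht_suf htq
      · exact h2 t ht_ne ht_suf htq
      · exact h4 t ht_ne htlt ht_suf htq
  · -- q is a prefix of t, hence a factor of p
    push_neg at hle
    have hqt : q <+: t := by
      have h1' : q <+: t ++ b := ⟨d, heq.symm⟩
      exact List.prefix_of_prefix_length_le h1' (List.prefix_append t b) (le_of_lt hle)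
    have hql : q.length < p.length := by omega
    have hpq' : q ≠ p := fun h => by rw [h] at hql; omega
    obtain ⟨r, hr⟩ := hqt
    obtain ⟨s, hs⟩ := ht_suf
    exact factor_contra q p hq hp hpq' ⟨s, r, by rw [← hs, ← hr, List.append_assoc]⟩

/-- Fact 1: if u and v do not overlap themselves or each other and neither is a
factor of the other, then any two distinct occurrences of words from {u, v} in a
word w are disjoint. -/
theorem fact1_disjoint_occurrences
    {X : Type*} (u v : List X) (hu : u ≠ []) (hv : v ≠ [])
    (h1 : ∀ t : List X, t ≠ [] → t <:+ u → ¬ t <+: v)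
    (h2 : ∀ t : List X, t ≠ [] → t <:+ v → ¬ t <+: u)
    (h3 : ∀ t : List X, t ≠ [] → t.length < u.length → t <:+ u → ¬ t <+: u)
    (h4 : ∀ t : List X, t ≠ [] → t.length < v.length → t <:+ v → ¬ t <+: v)
    (h5 : ¬ IsFactor u v) (h6 : ¬ IsFactor v u) :
    ∀ (w : List X) (p q : List X) (i j : ℕ),
      (p = u ∨ p = v) → (q = u ∨ q = v) →
      OccursAt p w i → OccursAt q w j → (p, i) ≠ (q, j) →
      i + p.length ≤ j ∨ j + q.length ≤ i := by
  intro w p q i j hp hq hop hoq hne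
  by_contra h
  push_neg at h
  obtain ⟨hja, hib⟩ := h
  rcases le_total i j with hij | hij
  · exact key_no_overlap u v h1 h2 h3 h4 h5 h6 w p q i j hp hq hop hoq hij hja hne
  · exact key_no_overlap u v h1 h2 h3 h4 h5 h6 w q p j i hq hp hoq hop hij hib
      (fun h => hne h.symm)
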